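/- Take n orderings of the variables x_1,…,x_n such that for every index i there is one ordering in which x_i is the greatest element, and take the corresponding n lexicographic term orders. If 𝓕 ⊆ 2^[n] is not shattering-extremal, then among these n lex orders there are two for which the sets of standard monomials of I(𝓕) differ. Equivalently: if Sm(I(𝓕)) is the same for all n of these lex orders, then 𝓕 is s-extremal. -/

import Mathlib

open MvPolynomial

/-- Monomials of `𝔽[x_1,…,x_n]` identified with their exponent vectors. -/
abbrev Mon (n : ℕ) := Fin n →₀ ℕ

/-- A linear order on monomials is a term order if `1` (i.e. the zero exponent
vector) is minimal and the order is compatible with multiplication by monomials. -/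
def IsTermOrder {n : ℕ} (lin : LinearOrder (Mon n)) : Prop :=
  (∀ u : Mon n, lin.le 0 u) ∧
    ∀ u v w : Mon n, lin.le u v → lin.le (u + w) (v + w)

/-- The strict lexicographic comparison of exponent vectors induced by the variable
ordering `x_{σ 0} ≻ x_{σ 1} ≻ ⋯ ≻ x_{σ (n-1)}`. -/
def lexLt {n : ℕ} (σ : Equiv.Perm (Fin n)) (u v : Mon n) : Prop :=
  ∃ j : Fin n, u (σ j) < v (σ j) ∧ ∀ i : Fin n, i < j → u (σ i) = v (σ i)

/-- `lin` is the lexicographic term order induced by the variable ordering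
`x_{σ 0} ≻ x_{σ 1} ≻ ⋯ ≻ x_{σ (n-1)}`. -/
def IsLexOrder {n : ℕ} (σ : Equiv.Perm (Fin n)) (lin : LinearOrder (Mon n)) : Prop :=
  ∀ u v : Mon n, lin.lt u v ↔ lexLt σ u v

/-- `m` is the leading monomial of `f` with respect to the monomial order `lin`. -/
def IsLeadMon {n : ℕ} {F : Type*} [CommSemiring F] (lin : LinearOrder (Mon n))
    (f : MvPolynomial (Fin n) F) (m : Mon n) : Prop :=
  m ∈ f.support ∧ ∀ m' ∈ f.support, lin.le m' m

/-- The set of standard monomials of an ideal `I` with respect to the monomial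
order `lin`: monomials that are not the leading monomial of any nonzero `f ∈ I`. -/
def stdMon {n : ℕ} {F : Type*} [CommSemiring F] (lin : LinearOrder (Mon n))
    (I : Ideal (MvPolynomial (Fin n) F)) : Set (Mon n) :=
  { m | ¬ ∃ f ∈ I, f ≠ 0 ∧ IsLeadMon lin f m }

/-- The vanishing ideal of a point set `V ⊆ F^n`. -/
def vanishIdeal {n : ℕ} {F : Type*} [CommRing F] (V : Set (Fin n → F)) :
    Ideal (MvPolynomial (Fin n) F) where
  carrier := { f | ∀ v ∈ V, MvPolynomial.eval v f = 0 }
  add_mem' := by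
    intro a b ha hb v hv
    simp [map_add, ha v hv, hb v hv]
  zero_mem' := by intro v hv; simp
  smul_mem' := by
    intro c f hf v hv
    simp [smul_eq_mul, hf v hv]

/-- A finite point set (in `{0,…,k-1}^n`, over any field) is extremal if its vanishing
ideal has the same standard monomials for every lexicographic term order. -/
def IsExtremal {n : ℕ} {F : Type*} [CommRing F] (V : Set (Fin n → F)) : Prop :=
  ∀ (σ₁ σ₂ : Equiv.Perm (Fin n)) (lin₁ lin₂ : LinearOrder (Mon n)),
    IsLexOrder σ₁ lin₁ → IsLexOrder σ₂ lin₂ →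
      stdMon lin₁ (vanishIdeal V) = stdMon lin₂ (vanishIdeal V)

/-- Embedding of a point of `{0,…,k-1}^n` into `F^n`. -/
def toField {n k : ℕ} (F : Type*) [Field F] (w : Fin n → Fin k) : Fin n → F :=
  fun i => ((w i : ℕ) : F)

/-- Identification of a point of `{0,…,k-1}^n` with an exponent vector in `ℕ^n`. -/
noncomputable def toExp {n k : ℕ} (w : Fin n → Fin k) : Mon n :=
  Finsupp.equivFunOnFinite.symm fun i => (w i : ℕ)

/-- The downshift `D_i(V)` of `V ⊆ {0,…,k-1}^n` at coordinate `i`: its `i`-section at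
each choice of the other coordinates is `{0,1,…,m-1}` where `m` is the size of the
corresponding `i`-section of `V`. -/
def downshift {n k : ℕ} (V : Finset (Fin n → Fin k)) (i : Fin n) :
    Finset (Fin n → Fin k) :=
  Finset.univ.filter fun w =>
    (w i : ℕ) < (Finset.univ.filter fun α : Fin k => Function.update w i α ∈ V).card

/-- The iterated downshift `D_{σ(n-1)}(D_{σ(n-2)}(⋯(D_{σ 0}(V))))`,
i.e. downshifts are applied at coordinates `σ 0, σ 1, …, σ (n-1)` in this order. -/
def iterDownshift {n k : ℕ} (σ : Equiv.Perm (Fin n)) (V : Finset (Fin n → Fin k)) :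
    Finset (Fin n → Fin k) :=
  (List.ofFn fun j : Fin n => σ j).foldl downshift V

/-- A polynomial is degree dominated (with dominating term `x^w`) if it equals
`x^w + Σ αᵢ x^{vᵢ}` where each `x^{vᵢ}` divides `x^w`. -/
def IsDegDominated {n : ℕ} {F : Type*} [CommSemiring F]
    (f : MvPolynomial (Fin n) F) : Prop :=
  ∃ w : Mon n, MvPolynomial.coeff w f = 1 ∧ ∀ v ∈ f.support, v ≤ w

/-- `G` is a Gröbner basis of `I` with respect to the monomial order `lin`:
`G ⊆ I` and for every nonzero `f ∈ I` some `g ∈ G` has leading monomial dividing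
the leading monomial of `f` (divisibility of monomials being `≤` of exponents). -/
def IsGroebner {n : ℕ} {F : Type*} [CommSemiring F] (lin : LinearOrder (Mon n))
    (G : Finset (MvPolynomial (Fin n) F)) (I : Ideal (MvPolynomial (Fin n) F)) : Prop :=
  (∀ g ∈ G, g ∈ I) ∧
    ∀ f ∈ I, f ≠ 0 → ∀ m : Mon n, IsLeadMon lin f m →
      ∃ g ∈ G, ∃ mg : Mon n, IsLeadMon lin g mg ∧ mg ≤ m

/-- `G` is a universal Gröbner basis of `I` if it is a Gröbner basis for every term order. -/
def IsUnivGroebner {n : ℕ} {F : Type*} [CommSemiring F]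
    (G : Finset (MvPolynomial (Fin n) F)) (I : Ideal (MvPolynomial (Fin n) F)) : Prop :=
  ∀ lin : LinearOrder (Mon n), IsTermOrder lin → IsGroebner lin G I

/-- A term order is an elimination order with respect to `x_i` if `x_i` is greater
than every monomial not involving `x_i`. -/
def IsElimOrder {n : ℕ} (lin : LinearOrder (Mon n)) (i : Fin n) : Prop :=
  IsTermOrder lin ∧ ∀ m : Mon n, m i = 0 → lin.lt m (Finsupp.single i 1)

/-- A set system `𝓕` shatters `S` if every subset of `S` is the intersection of `S`
with a member of `𝓕`. -/
def Shatters {n : ℕ} (𝓕 : Finset (Finset (Fin n))) (S : Finset (Fin n)) : Prop :=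
  ∀ T ⊆ S, ∃ Fm ∈ 𝓕, Fm ∩ S = T

open scoped Classical in
/-- The family `Sh(𝓕)` of sets shattered by `𝓕`. -/
noncomputable def shatteredFamily {n : ℕ} (𝓕 : Finset (Finset (Fin n))) :
    Finset (Finset (Fin n)) :=
  Finset.univ.filter fun S => Shatters 𝓕 S

/-- A set system is shattering-extremal if it shatters exactly `|𝓕|` sets. -/
def IsSExtremal {n : ℕ} (𝓕 : Finset (Finset (Fin n))) : Prop :=
  (shatteredFamily 𝓕).card = 𝓕.card

/-- The characteristic vector of a set, as a point of `F^n`. -/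
def charVec {n : ℕ} (F : Type*) [Field F] (Fm : Finset (Fin n)) : Fin n → F :=
  fun i => if i ∈ Fm then 1 else 0

/-- The squarefree monomial `∏_{i ∈ S} x_i` associated to a set `S ⊆ [n]`,
as an exponent vector. -/
noncomputable def setMon {n : ℕ} (S : Finset (Fin n)) : Mon n :=
  Finsupp.equivFunOnFinite.symm fun i => if i ∈ S then 1 else 0

/-- The polynomial `f_{S,H} = (∏_{i∈H} x_i) ⬝ ∏_{i∈S∖H} (x_i - 1)`. -/
noncomputable def fSH {n : ℕ} (F : Type*) [Field F] (S H : Finset (Fin n)) :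
    MvPolynomial (Fin n) F :=
  (∏ i ∈ H, X i) * ∏ i ∈ S \ H, (X i - 1)

/-- The downshift `D_i(𝓕)` of a set system. -/
def dshiftSet {n : ℕ} (𝓕 : Finset (Finset (Fin n))) (i : Fin n) :
    Finset (Finset (Fin n)) :=
  𝓕.image (fun Fm => Fm.erase i) ∪ 𝓕.filter fun Fm => i ∈ Fm ∧ Fm.erase i ∈ 𝓕

/-- The iterated downshift `D_{σ(n-1)}(⋯(D_{σ 0}(𝓕)))` of a set system:
downshifts are applied at `σ 0, σ 1, …, σ (n-1)` in this order. -/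
def iterDshiftSet {n : ℕ} (σ : Equiv.Perm (Fin n)) (𝓕 : Finset (Finset (Fin n))) :
    Finset (Finset (Fin n)) :=
  (List.ofFn fun j : Fin n => σ j).foldl dshiftSet 𝓕

/-- Restriction of an exponent vector in `ℕ^{n+1}` to its first `n` coordinates. -/
noncomputable def restrictMon {n : ℕ} (w : Mon (n + 1)) : Mon n :=
  Finsupp.equivFunOnFinite.symm fun i => w i.castSucc


/-! If all the given lex orders have the same standard monomials, then `x_S` is standard for
every shattered `S`. Otherwise reducing `x_S` modulo `I(𝓕)` leaves some `g ∈ I(𝓕)` whose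
other monomials are standard, so `x_S` is the leading monomial of `g` for every one of the
orders. As each variable `x_i` is the largest one in some order, `g` involves only the variables
of `S`; it is multilinear and vanishes on the whole cube `{0,1}^S` (which `𝓕` realises because
it shatters `S`), so `g = 0` by the combinatorial Nullstellensatz. Standard monomials are
linearly independent as functions on `𝓕`, hence `|Sh(𝓕)| ≤ |𝓕|`; Sauer–Shelah gives the
reverse inequality. -/

section LeadingMonomial

variable {n : ℕ} {R : Type*} [CommSemiring R]

theorem exists_isLeadMon (lin : LinearOrder (Mon n)) {f : MvPolynomial (Fin n) R} (hf : f ≠ 0) :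
    ∃ m, IsLeadMon lin f m := by
  let _ := lin
  obtain ⟨m, hm, hmax⟩ := f.support.exists_max_image id (support_nonempty.mpr hf)
  exact ⟨m, hm, hmax⟩

theorem isLeadMon_of_forall_ne_mem_stdMon {lin : LinearOrder (Mon n)}
    {I : Ideal (MvPolynomial (Fin n) R)} {g : MvPolynomial (Fin n) R} {m : Mon n}
    (hg : g ∈ I) (hm : m ∈ g.support)
    (hstd : ∀ m' ∈ g.support, m' ≠ m → m' ∈ stdMon lin I) : IsLeadMon lin g m := by
  have hg0 : g ≠ 0 := support_nonempty.mp ⟨m, hm⟩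
  obtain ⟨m₀, hm₀⟩ := exists_isLeadMon lin hg0
  obtain rfl : m₀ = m := by
    by_contra hne
    exact hstd m₀ hm₀.1 hne ⟨g, hg, hg0, hm₀⟩
  exact hm₀

theorem disjoint_restrictSupport_stdMon (lin : LinearOrder (Mon n))
    (I : Ideal (MvPolynomial (Fin n) R)) :
    Disjoint (restrictSupport R (stdMon lin I)) (I.restrictScalars R) := by
  refine Submodule.disjoint_def.mpr fun f hstd hI => ?_
  by_contra hf
  obtain ⟨m, hm⟩ := exists_isLeadMon lin hf
  exact hstd hm.1 ⟨f, hI, hf, hm⟩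

end LeadingMonomial

section Field

variable {n : ℕ} {K : Type*} [Field K]

theorem restrictSupport_stdMon_sup_eq_top {lin : LinearOrder (Mon n)} (hwf : WellFounded lin.lt)
    (I : Ideal (MvPolynomial (Fin n) K)) :
    restrictSupport K (stdMon lin I) ⊔ I.restrictScalars K = ⊤ := by
  set N := restrictSupport K (stdMon lin I) ⊔ I.restrictScalars K
  rw [eq_top_iff, ← (basisMonomials (Fin n) K).span_eq, Submodule.span_le]
  rintro _ ⟨m, rfl⟩
  rw [coe_basisMonomials]
  induction m using hwf.induction with
  | _ m ih =>
  by_cases hm : m ∈ stdMon lin I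
  · refine Submodule.mem_sup_left ((mem_restrictSupport_iff K).mpr ?_)
    refine (Finset.coe_subset.mpr support_monomial_subset).trans ?_
    simpa using hm
  obtain ⟨p, hpI, -, hlead⟩ := not_not.mp hm
  set c := coeff m p
  have hc : c ≠ 0 := mem_support_iff.mp hlead.1
  set q := p - monomial m c
  have hq : q ∈ N := by
    have hlt : (q.support : Set (Mon n)) ⊆ {m' | lin.lt m' m} := by
      intro m' hm'
      have hne : m' ≠ m := by
        rintro rfl
        simp [q, c] at hm'
      have hp : m' ∈ p.support := by
        simpa [q, coeff_monomial, hne.symm] using hm'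
      exact @lt_of_le_of_ne _ lin.toPartialOrder _ _ (hlead.2 m' hp) hne
    have := (mem_restrictSupport_iff K).mpr hlt
    rw [restrictSupport_eq_span] at this
    refine Submodule.span_le.mpr ?_ this
    rintro _ ⟨m', hm', rfl⟩
    exact ih m' hm'
  have hmono : monomial m (1 : K) = c⁻¹ • (p - q) := by
    rw [sub_sub_cancel, smul_monomial, smul_eq_mul, inv_mul_cancel₀ hc]
  change monomial m (1 : K) ∈ N
  rw [hmono]
  exact N.smul_mem _ (N.sub_mem (Submodule.mem_sup_right hpI) hq)

theorem mem_vanishIdeal {V : Set (Fin n → K)} {f : MvPolynomial (Fin n) K} :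
    f ∈ vanishIdeal V ↔ ∀ v ∈ V, eval v f = 0 := Iff.rfl

theorem card_le_card_of_subset_stdMon {lin : LinearOrder (Mon n)} {V : Finset (Fin n → K)}
    {M : Finset (Mon n)} (hM : ↑M ⊆ stdMon lin (vanishIdeal (V : Set (Fin n → K)))) :
    M.card ≤ V.card := by
  let E : MvPolynomial (Fin n) K →ₗ[K] V → K :=
    LinearMap.pi fun v => (aeval (v : Fin n → K)).toLinearMap
  have hker : LinearMap.ker E = (vanishIdeal (V : Set (Fin n → K))).restrictScalars K := by
    ext f
    simp [E, funext_iff, mem_vanishIdeal]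
  have hli : LinearIndependent K fun m : M => E (monomial m 1) := by
    refine ((basisMonomials (Fin n) K).linearIndependent.comp _ Subtype.val_injective).map ?_
    rw [hker]
    refine (disjoint_restrictSupport_stdMon lin _).mono_left ?_
    rw [restrictSupport_eq_span]
    refine Submodule.span_mono ?_
    rintro _ ⟨m, rfl⟩
    exact ⟨m, hM m.2, by simp⟩
  simpa using hli.fintype_card_le_finrank

end Field

namespace IsLexOrder

variable {n : ℕ} {σ : Equiv.Perm (Fin n)} {lin : LinearOrder (Mon n)}

theorem wellFounded (hlin : IsLexOrder σ lin) : WellFounded lin.lt := by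
  have hwf : WellFounded (Pi.Lex (· < ·) (fun {_ : Fin n} => (· < · : ℕ → ℕ → Prop))) :=
    Pi.Lex.wellFounded _ fun _ => Nat.lt_wfRel.wf
  refine Subrelation.wf (fun {u v} huv => ?_) (InvImage.wf (fun u : Mon n => fun k => u (σ k)) hwf)
  obtain ⟨j, hj, hpre⟩ := (hlin u v).mp huv
  exact ⟨j, hpre, hj⟩

theorem lt_of_lt (hlin : IsLexOrder σ lin) {u v : Mon n} (h : u < v) : lin.lt u v := by
  obtain ⟨i, hi⟩ : ∃ i, u i ≠ v i := by
    by_contra! heq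
    exact h.ne (Finsupp.ext heq)
  obtain ⟨j, hj, hmin⟩ := wellFounded_lt.has_min {k | u (σ k) ≠ v (σ k)} ⟨σ.symm i, by simpa⟩
  refine (hlin u v).mpr ⟨j, lt_of_le_of_ne (h.le (σ j)) hj, fun k hk => ?_⟩
  by_contra hne
  exact hmin k hne hk

end IsLexOrder

theorem le_one_of_mem_stdMon_vanishIdeal {n : ℕ} {R : Type*} [CommRing R] [Nontrivial R]
    {σ : Equiv.Perm (Fin n)} {lin : LinearOrder (Mon n)} (hlin : IsLexOrder σ lin)
    {V : Set (Fin n → R)} (hV : ∀ v ∈ V, ∀ i, v i = 0 ∨ v i = 1) {m : Mon n}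
    (hm : m ∈ stdMon lin (vanishIdeal V)) (j : Fin n) : m j ≤ 1 := by
  by_contra! hj
  set r := m - Finsupp.single j 2
  have hr : r + Finsupp.single j 2 = m := tsub_add_cancel_of_le (Finsupp.single_le_iff.mpr hj)
  set m' := r + Finsupp.single j 1
  have hlt : m' < m := by
    rw [← hr]
    exact add_lt_add_right (lt_of_le_of_ne (Finsupp.single_le_single.mpr one_le_two)
      ((Finsupp.single_injective j).ne (by norm_num))) r
  set p : MvPolynomial (Fin n) R := monomial r 1 * (X j ^ 2 - X j)
  have hp : p = monomial m 1 - monomial m' 1 := by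
    rw [← hr]
    simp only [p, m', X, mul_sub, monomial_pow, monomial_mul, one_pow, Finsupp.smul_single,
      smul_eq_mul, mul_one]
  have hpI : p ∈ vanishIdeal V := by
    refine Ideal.mul_mem_left _ _ fun v hv => ?_
    rcases hV v hv j with h | h <;> simp [h]
  have hcoeff : coeff m p = 1 := by simp [hp, coeff_monomial, hlt.ne]
  have hsupp : p.support ⊆ {m, m'} := by
    rw [hp]
    refine (support_sub _ _ _).trans (Finset.union_subset_union support_monomial_subset
      support_monomial_subset)
  refine hm ⟨p, hpI, fun h0 => by simp [h0] at hcoeff, by simp [hcoeff], fun u hu => ?_⟩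
  rcases Finset.mem_insert.mp (hsupp hu) with rfl | hu
  · exact lin.le_refl u
  · exact ((lin.lt_iff_le_not_ge _ _).mp (Finset.mem_singleton.mp hu ▸ hlin.lt_of_lt hlt)).1

section SetSystems

variable {n : ℕ}

theorem setMon_apply (S : Finset (Fin n)) (i : Fin n) :
    setMon S i = if i ∈ S then 1 else 0 := by
  simp [setMon]

theorem setMon_support (S : Finset (Fin n)) : (setMon S).support = S := by
  ext i
  by_cases hi : i ∈ S <;> simp [setMon_apply, hi]

theorem setMon_le_one (S : Finset (Fin n)) (i : Fin n) : setMon S i ≤ 1 := by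
  rw [setMon_apply]
  split <;> omega

theorem setMon_injective : Function.Injective (setMon (n := n)) := fun S T hST => by
  rw [← setMon_support S, hST, setMon_support]

theorem shatters_iff {𝓕 : Finset (Finset (Fin n))} {S : Finset (Fin n)} :
    Shatters 𝓕 S ↔ 𝓕.Shatters S := by
  simp only [Shatters, Finset.Shatters, Finset.inter_comm S]

theorem mem_shatteredFamily {𝓕 : Finset (Finset (Fin n))} {S : Finset (Fin n)} :
    S ∈ shatteredFamily 𝓕 ↔ Shatters 𝓕 S := by
  simp [shatteredFamily]

theorem shatteredFamily_eq_shatterer (𝓕 : Finset (Finset (Fin n))) :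
    shatteredFamily 𝓕 = 𝓕.shatterer := by
  ext S
  rw [mem_shatteredFamily, shatters_iff, Finset.mem_shatterer]

theorem charVec_eq_zero_or_eq_one {K : Type*} [Field K] [DecidableEq (Fin n → K)]
    {𝓕 : Finset (Finset (Fin n))} :
    ∀ v ∈ (𝓕.image (charVec K) : Set (Fin n → K)), ∀ i, v i = 0 ∨ v i = 1 := by
  simp only [Finset.coe_image, Set.mem_image]
  rintro _ ⟨Fm, -, rfl⟩ i
  unfold charVec
  split_ifs <;> simp

end SetSystems

theorem eq_zero_of_mem_vanishIdeal_of_shatters {n : ℕ} {K : Type*} [Field K]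
    [DecidableEq (Fin n → K)] {𝓕 : Finset (Finset (Fin n))} {S : Finset (Fin n)}
    (hS : Shatters 𝓕 S) {g : MvPolynomial (Fin n) K}
    (hg : g ∈ vanishIdeal (𝓕.image (charVec K) : Set (Fin n → K)))
    (hsupp : ∀ m ∈ g.support, m.support ⊆ S) (hsq : ∀ m ∈ g.support, ∀ i, m i ≤ 1) :
    g = 0 := by
  classical
  refine eq_zero_of_eval_zero_at_prod_finset g (fun i => if i ∈ S then {0, 1} else {0})
    (fun i => ?_) (fun x hx => ?_)
  · rw [degreeOf_lt_iff (by split_ifs <;> simp)]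
    intro m hm
    split_ifs with hi
    · simpa [Finset.card_pair zero_ne_one, Nat.lt_succ_iff] using hsq m hm i
    · simpa using fun h => hi (hsupp m hm (Finsupp.mem_support_iff.mpr h))
  obtain ⟨Fm, hFm, hFmS⟩ := hS (S.filter fun i => x i = 1) (Finset.filter_subset _ _)
  have hx_eq : ∀ i ∈ g.vars, x i = charVec K Fm i := by
    intro i hi
    obtain ⟨m, hm, him⟩ := (mem_vars_iff_mem_support i).mp hi
    have hiS : i ∈ S := hsupp m hm him
    have hiFm : i ∈ Fm ↔ x i = 1 := by
      simpa [hiS] using congrArg (i ∈ ·) hFmS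
    have hxi := hx i
    simp only [hiS, if_true, Finset.mem_insert, Finset.mem_singleton] at hxi
    rcases hxi with h | h <;> simp [charVec, hiFm, h]
  have heval : eval x g = eval (charVec K Fm) g :=
    hom_congr_vars (RingHom.ext fun _ => by simp) (fun i hi _ => by simpa using hx_eq i hi) rfl
  rw [heval]
  exact hg _ (Finset.mem_coe.mpr (Finset.mem_image_of_mem _ hFm))

theorem support_subset_of_forall_le {n : ℕ} (hn : 0 < n) {σ : Fin n → Equiv.Perm (Fin n)}
    (hσ : ∀ i, σ i ⟨0, hn⟩ = i) {lin : Fin n → LinearOrder (Mon n)}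
    (hlin : ∀ i, IsLexOrder (σ i) (lin i)) {u v : Mon n} (h : ∀ i, (lin i).le v u) :
    v.support ⊆ u.support := by
  intro i hi
  by_contra hiu
  have hlt : (lin i).lt u v := by
    refine (hlin i u v).mpr ⟨⟨0, hn⟩, ?_, fun k hk => absurd hk (Nat.not_lt_zero _)⟩
    rw [hσ i]
    simp only [Finsupp.mem_support_iff, not_not] at hi hiu
    omega
  exact ((lin i).lt_iff_le_not_ge _ _).mp hlt |>.2 (h i)

theorem setMon_mem_stdMon_of_shatters {n : ℕ} (hn : 0 < n) {K : Type*} [Field K]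
    [DecidableEq (Fin n → K)] {𝓕 : Finset (Finset (Fin n))} {σ : Fin n → Equiv.Perm (Fin n)}
    (hσ : ∀ i, σ i ⟨0, hn⟩ = i) {lin : Fin n → LinearOrder (Mon n)}
    (hlin : ∀ i, IsLexOrder (σ i) (lin i))
    (hstd : ∀ i j, stdMon (lin i) (vanishIdeal (𝓕.image (charVec K) : Set (Fin n → K))) =
      stdMon (lin j) (vanishIdeal (𝓕.image (charVec K) : Set (Fin n → K))))
    {S : Finset (Fin n)} (hS : Shatters 𝓕 S) (i₀ : Fin n) :
    setMon S ∈ stdMon (lin i₀) (vanishIdeal (𝓕.image (charVec K) : Set (Fin n → K))) := by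
  set I := vanishIdeal (𝓕.image (charVec K) : Set (Fin n → K))
  by_contra hS'
  have hmem : monomial (setMon S) (1 : K) ∈ restrictSupport K (stdMon (lin i₀) I) ⊔
      I.restrictScalars K := by
    rw [restrictSupport_stdMon_sup_eq_top (hlin i₀).wellFounded]
    exact Submodule.mem_top
  obtain ⟨h, hh, g, hg, hhg⟩ := Submodule.mem_sup.mp hmem
  have hcoeff : ∀ m, coeff m g = coeff m (monomial (setMon S) (1 : K)) - coeff m h := by
    simp [← hhg]
  have hgS : coeff (setMon S) g = 1 := by
    simpa [hcoeff] using notMem_support_iff.mp fun hm => hS' (hh hm)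
  have hgstd : ∀ m ∈ g.support, m ≠ setMon S → m ∈ stdMon (lin i₀) I := by
    intro m hm hne
    apply (mem_restrictSupport_iff K).mp hh
    rw [Finset.mem_coe, mem_support_iff]
    intro h0
    simp [mem_support_iff, hcoeff, h0, coeff_monomial, Ne.symm hne] at hm
  -- All the lex orders agree on the standard monomials, so `x^S` leads `g` for each of them.
  have hlead : ∀ i, IsLeadMon (lin i) g (setMon S) := fun i =>
    isLeadMon_of_forall_ne_mem_stdMon hg (mem_support_iff.mpr (by simp [hgS]))
      fun m hm hne => hstd i₀ i ▸ hgstd m hm hne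
  have hsupp : ∀ m ∈ g.support, m.support ⊆ S := fun m hm =>
    setMon_support S ▸ support_subset_of_forall_le hn hσ hlin fun i => (hlead i).2 m hm
  have hsq : ∀ m ∈ g.support, ∀ i, m i ≤ 1 := by
    intro m hm i
    by_cases hne : m = setMon S
    · exact hne ▸ setMon_le_one S i
    · exact le_one_of_mem_stdMon_vanishIdeal (hlin i₀) charVec_eq_zero_or_eq_one
        (hgstd m hm hne) i
  have hg0 := eq_zero_of_mem_vanishIdeal_of_shatters hS hg hsupp hsq
  simp [hg0] at hgS

open scoped Classical in
/-- Theorem `algthm`.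
Take `n` orderings of the variables such that for each `i` there is one in which `xᵢ`
is the greatest, with corresponding lex orders. If `𝓕 ⊆ 2^[n]` is not s-extremal, then
two of these lex orders give different standard monomials for `I(𝓕)`. -/
theorem not_sExtremal_exists_differing_lex_orders {n : ℕ} (hn : 0 < n)
    {F : Type*} [Field F] (𝓕 : Finset (Finset (Fin n)))
    (σ : Fin n → Equiv.Perm (Fin n)) (hσ : ∀ i : Fin n, σ i ⟨0, hn⟩ = i)
    (lin : Fin n → LinearOrder (Mon n)) (hlin : ∀ i : Fin n, IsLexOrder (σ i) (lin i))
    (h : ¬ IsSExtremal 𝓕) :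
    ∃ i j : Fin n,
      stdMon (lin i) (vanishIdeal ((𝓕.image (charVec F) : Finset (Fin n → F)) :
          Set (Fin n → F))) ≠
        stdMon (lin j) (vanishIdeal ((𝓕.image (charVec F) : Finset (Fin n → F)) :
          Set (Fin n → F))) := by
  by_contra! hstd
  refine h (le_antisymm ?_ ?_)
  · have hsub : ↑((shatteredFamily 𝓕).image setMon) ⊆ stdMon (lin ⟨0, hn⟩)
        (vanishIdeal ((𝓕.image (charVec F) : Finset (Fin n → F)) : Set (Fin n → F))) := by
      intro _ hm
      obtain ⟨S, hS, rfl⟩ := Finset.mem_image.mp (Finset.mem_coe.mp hm)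
      exact setMon_mem_stdMon_of_shatters hn hσ hlin hstd (mem_shatteredFamily.mp hS) _
    calc (shatteredFamily 𝓕).card = ((shatteredFamily 𝓕).image setMon).card :=
          (Finset.card_image_of_injective _ setMon_injective).symm
      _ ≤ (𝓕.image (charVec F)).card := card_le_card_of_subset_stdMon hsub
      _ ≤ 𝓕.card := Finset.card_image_le
  · rw [shatteredFamily_eq_shatterer]
    exact Finset.card_le_card_shatterer 𝓕
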